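/- arXiv:1403.2647 — 5 statements merged into one kernel-verified Lean document; each statement's English description precedes it below -/
import Mathlib

section
/- Let X be a real Banach space that does not have the Schur property. Then for every c > 0 and every R > 2 one has min{ η_X(c,R), R/2 − 1 } ≤ r_X(c). -/
open Filter Topology MeasureTheory
open scoped ENNReal ZeroAtInfty

noncomputable section

/-- A sequence in a Banach space is weakly null if `φ (x n) → 0` for every
continuous linear functional `φ`. -/
def WeaklyNull {X : Type*} [NormedAddCommGroup X] [NormedSpace ℝ X] (u : ℕ → X) : Prop :=
  ∀ φ : X →L[ℝ] ℝ, Tendsto (fun n => φ (u n)) atTop (𝓝 0)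

/-- The Schur property: every weakly null sequence converges to `0` in norm. -/
def SchurProperty (X : Type*) [NormedAddCommGroup X] [NormedSpace ℝ X] : Prop :=
  ∀ u : ℕ → X, WeaklyNull u → Tendsto (fun n => ‖u n‖) atTop (𝓝 0)

/-- The Opial modulus `r_X(c)`. -/
def opialModulus (X : Type*) [NormedAddCommGroup X] [NormedSpace ℝ X] (c : ℝ) : ℝ :=
  sInf { d : ℝ | ∃ (x : X) (u : ℕ → X), c ≤ ‖x‖ ∧ WeaklyNull u ∧
    1 ≤ liminf (fun n => ‖u n‖) atTop ∧
    d = liminf (fun n => ‖u n - x‖) atTop - 1 }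

/-- The modulus `η_X(ε, R)`. -/
def etaModulus (X : Type*) [NormedAddCommGroup X] [NormedSpace ℝ X] (ε R : ℝ) : ℝ :=
  sInf { d : ℝ | ∃ (x : X) (u : ℕ → X), ε ≤ ‖x‖ ∧ WeaklyNull u ∧
    limsup (fun n => ‖u n‖) atTop ≤ R ∧
    d = liminf (fun n => ‖u n - x‖) atTop - liminf (fun n => ‖u n‖) atTop }

/-- The García-Falset coefficient `R(X)`. -/
def garciaFalset (X : Type*) [NormedAddCommGroup X] [NormedSpace ℝ X] : ℝ :=
  sSup { a : ℝ | ∃ (x : X) (u : ℕ → X), ‖x‖ ≤ 1 ∧ (∀ n, ‖u n‖ ≤ 1) ∧ WeaklyNull u ∧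
    a = liminf (fun n => ‖u n + x‖) atTop }

/-- The degree of WORTHness `w(X)`. -/
def worthDegree (X : Type*) [NormedAddCommGroup X] [NormedSpace ℝ X] : ℝ :=
  sSup { r : ℝ | 0 ≤ r ∧ ∀ (x : X) (u : ℕ → X), WeaklyNull u →
    r * liminf (fun n => ‖u n + x‖) atTop ≤ liminf (fun n => ‖u n - x‖) atTop }

/-- Gao's modulus of u-convexity `u_X(ε)`. -/
def uModulus (X : Type*) [NormedAddCommGroup X] [NormedSpace ℝ X] (ε : ℝ) : ℝ :=
  sInf { d : ℝ | ∃ (x y : X) (φ : X →L[ℝ] ℝ), ‖x‖ = 1 ∧ ‖y‖ = 1 ∧ ‖φ‖ = 1 ∧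
    φ x = 1 ∧ φ y ≤ 1 - ε ∧ d = 1 - ‖(2⁻¹ : ℝ) • (x + y)‖ }

/-- The c₀-sum of a family of Banach spaces: the closure, inside the ℓ∞-sum, of the
set of finitely supported families. -/
def c0Sum {I : Type*} (X : I → Type*) [∀ i, NormedAddCommGroup (X i)]
    [∀ i, NormedSpace ℝ (X i)] : Submodule ℝ (lp X ∞) :=
  (Submodule.span ℝ { f : lp X ∞ | Set.Finite { i | (f : ∀ i, X i) i ≠ 0 } }).topologicalClosure

end

/-! Let `‖x‖ ≥ c`, let `(u n)` be weakly null with `liminf ‖u n‖ ≥ 1`, and let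
`L = liminf ‖u n - x‖`. If `2 L ≥ R` then `L - 1 ≥ R / 2 - 1`. Otherwise pass to a subsequence
along which `‖u n - x‖ → L`; by weak lower semicontinuity of the norm `‖x‖ ≤ L`, so
`limsup ‖u n‖ ≤ L + ‖x‖ ≤ 2 L ≤ R` along it, and it is admissible for `η_X(c, R)`, giving
`η_X(c, R) ≤ L - liminf ‖u n‖ ≤ L - 1`. Failure of the Schur property provides a normalized weakly
null sequence, so the infimum defining `r_X(c)` is over a nonempty set. -/

namespace WeaklyNull

variable {X : Type*} [NormedAddCommGroup X] [NormedSpace ℝ X] {u : ℕ → X}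

/- Uniform boundedness on the dual space, which is complete even when `X` is not. -/
theorem exists_norm_le (hu : WeaklyNull u) : ∃ C, ∀ n, ‖u n‖ ≤ C := by
  have hpt : ∀ φ : StrongDual ℝ X, ∃ C, ∀ n, ‖NormedSpace.inclusionInDoubleDual ℝ X (u n) φ‖ ≤ C :=
    fun φ => (hu φ).norm.isBoundedUnder_le.bddAbove_range.imp fun _ hC n => hC ⟨n, rfl⟩
  obtain ⟨C, hC⟩ := banach_steinhaus hpt
  exact ⟨C, fun n => ((NormedSpace.inclusionInDoubleDualLi ℝ).norm_map (u n)).symm.le.trans (hC n)⟩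

theorem isBoundedUnder_norm_sub (hu : WeaklyNull u) (x : X) :
    IsBoundedUnder (· ≤ ·) atTop fun n => ‖u n - x‖ := by
  obtain ⟨C, hC⟩ := hu.exists_norm_le
  exact isBoundedUnder_of ⟨C + ‖x‖, fun n => (norm_sub_le _ _).trans (by gcongr; exact hC n)⟩

theorem comp {ψ : ℕ → ℕ} (hu : WeaklyNull u) (hψ : Tendsto ψ atTop atTop) :
    WeaklyNull (u ∘ ψ) :=
  fun φ => (hu φ).comp hψ

theorem smul {a : ℕ → ℝ} (hu : WeaklyNull u) (ha : IsBoundedUnder (· ≤ ·) atTop fun n => ‖a n‖) :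
    WeaklyNull fun n => a n • u n := by
  intro φ
  simpa only [map_smul, smul_eq_mul] using isBoundedUnder_le_mul_tendsto_zero ha (hu φ)

theorem norm_le_liminf_norm_sub (hu : WeaklyNull u) (x : X) :
    ‖x‖ ≤ liminf (fun n => ‖u n - x‖) atTop := by
  obtain ⟨φ, hφ, hφx⟩ := exists_dual_vector'' ℝ x
  have hlim : Tendsto (fun n => φ (x - u n)) atTop (𝓝 ‖x‖) := by
    simpa [hφx] using (hu φ).const_sub (φ x)
  refine hlim.liminf_eq.symm.le.trans <|
    liminf_le_liminf (Eventually.of_forall fun n => ?_) hlim.isBoundedUnder_ge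
      (hu.isBoundedUnder_norm_sub x).isCoboundedUnder_ge
  calc φ (x - u n) ≤ ‖φ‖ * ‖x - u n‖ := (le_abs_self _).trans (φ.le_opNorm _)
    _ ≤ ‖u n - x‖ := by rw [norm_sub_rev]; exact mul_le_of_le_one_left (norm_nonneg _) hφ

end WeaklyNull

section

variable {X : Type*} [NormedAddCommGroup X] [NormedSpace ℝ X]

theorem exists_weaklyNull_norm_eq_one_of_not_schurProperty (hX : ¬ SchurProperty X) :
    ∃ v : ℕ → X, WeaklyNull v ∧ ∀ n, ‖v n‖ = 1 := by
  obtain ⟨u, hu, hnorm⟩ : ∃ u : ℕ → X, WeaklyNull u ∧ ¬ Tendsto (fun n => ‖u n‖) atTop (𝓝 0) := by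
    simpa [SchurProperty] using hX
  obtain ⟨δ, hδ, hfreq⟩ : ∃ δ > 0, ∃ᶠ n in atTop, δ ≤ ‖u n‖ := by
    contrapose! hnorm
    simpa [Metric.tendsto_nhds] using hnorm
  obtain ⟨ψ, hψ, hδψ⟩ := extraction_of_frequently_atTop hfreq
  have hpos : ∀ k, 0 < ‖u (ψ k)‖ := fun k => hδ.trans_le (hδψ k)
  refine ⟨fun k => ‖u (ψ k)‖⁻¹ • u (ψ k), (hu.comp hψ.tendsto_atTop).smul ?_, fun k => ?_⟩
  · refine isBoundedUnder_of ⟨δ⁻¹, fun k => ?_⟩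
    rw [norm_inv, norm_norm]
    exact inv_anti₀ hδ (hδψ k)
  · rw [norm_smul, norm_inv, norm_norm, inv_mul_cancel₀ (hpos k).ne']

theorem etaModulus_le {ε R : ℝ} {x : X} {u : ℕ → X} (hx : ε ≤ ‖x‖) (hu : WeaklyNull u)
    (huR : limsup (fun n => ‖u n‖) atTop ≤ R) :
    etaModulus X ε R ≤ liminf (fun n => ‖u n - x‖) atTop - liminf (fun n => ‖u n‖) atTop := by
  refine csInf_le ⟨-R, ?_⟩ ⟨x, u, hx, hu, huR, rfl⟩
  rintro d ⟨y, v, -, hv, hvR, rfl⟩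
  have hbdd : IsBoundedUnder (· ≤ ·) atTop fun n => ‖v n‖ := by
    simpa using hv.isBoundedUnder_norm_sub 0
  have hliminf : liminf (fun n => ‖v n‖) atTop ≤ R :=
    (liminf_le_limsup hbdd (isBoundedUnder_of ⟨0, fun n => norm_nonneg _⟩)).trans hvR
  linarith [norm_nonneg y, hv.norm_le_liminf_norm_sub y]

theorem etaModulus_le_liminf_norm_sub_sub_one {c R : ℝ} {x : X} {u : ℕ → X} (hx : c ≤ ‖x‖)
    (hu : WeaklyNull u) (hu1 : 1 ≤ liminf (fun n => ‖u n‖) atTop)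
    (hR : 2 * liminf (fun n => ‖u n - x‖) atTop ≤ R) :
    etaModulus X c R ≤ liminf (fun n => ‖u n - x‖) atTop - 1 := by
  set L := liminf (fun n => ‖u n - x‖) atTop
  obtain ⟨ψ, hL, hψ⟩ := exists_seq_tendsto_liminf (hu.isBoundedUnder_norm_sub x).isCoboundedUnder_ge
    (isBoundedUnder_of ⟨0, fun n => norm_nonneg _⟩)
  have hv := hu.comp hψ
  have hlimsup : limsup (fun k => ‖u (ψ k)‖) atTop ≤ R := by
    have hsum : Tendsto (fun k => ‖u (ψ k) - x‖ + ‖x‖) atTop (𝓝 (L + ‖x‖)) := hL.add_const _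
    calc limsup (fun k => ‖u (ψ k)‖) atTop ≤ L + ‖x‖ := by
          rw [← hsum.limsup_eq]
          refine limsup_le_limsup (Eventually.of_forall fun k => ?_)
            (isCoboundedUnder_le_of_le atTop fun k => norm_nonneg _) hsum.isBoundedUnder_le
          simpa using norm_add_le (u (ψ k) - x) x
      _ ≤ R := by linarith [hu.norm_le_liminf_norm_sub x]
  have hliminf : 1 ≤ liminf (fun k => ‖u (ψ k)‖) atTop := by
    obtain ⟨C, hC⟩ := hu.exists_norm_le
    exact hu1.trans <| hψ.liminf_le_liminf_comp (isCoboundedUnder_ge_of_le _ hC)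
      (isBoundedUnder_of ⟨0, fun n => norm_nonneg _⟩)
  calc etaModulus X c R
      ≤ liminf (fun k => ‖u (ψ k) - x‖) atTop - liminf (fun k => ‖u (ψ k)‖) atTop :=
        etaModulus_le hx hv hlimsup
    _ = L - liminf (fun k => ‖u (ψ k)‖) atTop := by congr 1; exact hL.liminf_eq
    _ ≤ L - 1 := by gcongr

end

theorem statement0_general (X : Type*) [NormedAddCommGroup X] [NormedSpace ℝ X]
    (hX : ¬ SchurProperty X) (c R : ℝ) (hc : 0 < c) :
    min (etaModulus X c R) (R / 2 - 1) ≤ opialModulus X c := by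
  obtain ⟨v, hv, hv1⟩ := exists_weaklyNull_norm_eq_one_of_not_schurProperty hX
  have hcv : c ≤ ‖c • v 0‖ := by rw [norm_smul, hv1, mul_one, Real.norm_of_nonneg hc.le]
  refine le_csInf ⟨_, c • v 0, v, hcv, hv, by simp [hv1], rfl⟩ ?_
  rintro _ ⟨x, u, hx, hu, hu1, rfl⟩
  rcases le_or_gt (2 * liminf (fun n => ‖u n - x‖) atTop) R with hR | hR
  · exact (min_le_left _ _).trans (etaModulus_le_liminf_norm_sub_sub_one hx hu hu1 hR)
  · exact (min_le_right _ _).trans (by linarith)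

/-- For a real Banach space `X` without the Schur property, every `c > 0` and `R > 2` satisfy
`min (η_X(c,R)) (R/2 - 1) ≤ r_X(c)`. -/
theorem statement0 (X : Type*) [NormedAddCommGroup X] [NormedSpace ℝ X] [CompleteSpace X]
    (hX : ¬ SchurProperty X) (c R : ℝ) (hc : 0 < c) (hR : 2 < R) :
    min (etaModulus X c R) (R / 2 - 1) ≤ opialModulus X c :=
  statement0_general X hX c R hc
end

section
/- Let X be a real Banach space that does not have the Schur property. Then for all ε, R > 0 with r_X(ε/R) > 0 one has ε·r_X(ε/R) / (2 + r_X(ε/R)) ≤ η_X(ε,R). -/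
open Filter Topology MeasureTheory
open scoped ENNReal ZeroAtInfty

/-!
Given `‖x‖ ≥ ε` and a weakly null `u` with `limsup ‖u n‖ ≤ R`, pass to a subsequence along which
`‖u n - x‖ → liminf ‖u n - x‖ =: M` and `‖u n‖ → t`, where `liminf ‖u n‖ ≤ t ≤ R`. Put
`r = r_X(ε/R)`. If `t ≥ ε/(2+r)`, rescaling by `t⁻¹` puts the pair in the range of the Opial
modulus at `ε/R`, so `M ≥ t (1 + r)`; otherwise the triangle inequality gives `M ≥ ε - t`.
In both cases `M - t ≥ ε r/(2+r)`.
-/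

lemma Real.liminf_nonneg {f : ℕ → ℝ} (hf : ∀ n, 0 ≤ f n) : 0 ≤ liminf f atTop :=
  Real.sSup_nonneg' ⟨0, Eventually.of_forall hf, le_rfl⟩

lemma Real.exists_subseq_tendsto_liminf {f g : ℕ → ℝ} (hf : Bornology.IsBounded (Set.range f))
    (hg : Bornology.IsBounded (Set.range g)) :
    ∃ τ : ℕ → ℕ, Tendsto τ atTop atTop ∧ Tendsto (f ∘ τ) atTop (𝓝 (liminf f atTop)) ∧
      ∃ t, Tendsto (g ∘ τ) atTop (𝓝 t) ∧ liminf g atTop ≤ t ∧ t ≤ limsup g atTop := by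
  rw [isBounded_iff_bddBelow_bddAbove] at hf hg
  obtain ⟨ψ, hfψ, hψ⟩ := exists_seq_tendsto_liminf (u := f) (f := atTop)
    hf.2.isBoundedUnder_of_range.isCoboundedUnder_flip hf.1.isBoundedUnder_of_range
  obtain ⟨t, -, σ, hσ, hgτ⟩ := tendsto_subseq_of_bounded (x := g ∘ ψ)
    (isBounded_iff_bddBelow_bddAbove.2 hg) (fun k => Set.mem_range_self (ψ k))
  have hτ : Tendsto (ψ ∘ σ) atTop atTop := hψ.comp hσ.tendsto_atTop
  have hcluster : MapClusterPt t atTop g := (hgτ.mapClusterPt).of_comp hτ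
  exact ⟨ψ ∘ σ, hτ, hfψ.comp hσ.tendsto_atTop, t, hgτ,
    hcluster.liminf_le hg.1.isBoundedUnder_of_range, hcluster.le_limsup hg.2.isBoundedUnder_of_range⟩

namespace WeaklyNull

variable {X : Type*} [NormedAddCommGroup X] [NormedSpace ℝ X] {u : ℕ → X}

lemma comp_tendsto (hu : WeaklyNull u) {τ : ℕ → ℕ} (hτ : Tendsto τ atTop atTop) :
    WeaklyNull (u ∘ τ) := fun φ => (hu φ).comp hτ

lemma const_smul (hu : WeaklyNull u) (a : ℝ) : WeaklyNull (fun n => a • u n) := fun φ => by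
  simpa using (hu φ).const_mul a

/-- Banach–Steinhaus for `u` seen in the bidual, over the complete space `StrongDual ℝ X`. -/
lemma isBounded_range (hu : WeaklyNull u) : Bornology.IsBounded (Set.range u) := by
  obtain ⟨C, hC⟩ := banach_steinhaus (g := fun n => NormedSpace.inclusionInDoubleDual ℝ X (u n))
    fun φ => ((hu φ).norm.bddAbove_range).imp fun b hb n => hb ⟨n, rfl⟩
  refine isBounded_iff_forall_norm_le.2 ⟨C, ?_⟩
  rintro _ ⟨n, rfl⟩
  exact ((NormedSpace.inclusionInDoubleDualLi ℝ).norm_map (u n)).ge.trans (hC n)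

end WeaklyNull

section Moduli

variable {X : Type*} [NormedAddCommGroup X] [NormedSpace ℝ X]

lemma opialModulus_le {c : ℝ} {x : X} {u : ℕ → X} (hx : c ≤ ‖x‖) (hu : WeaklyNull u)
    (hu1 : 1 ≤ liminf (fun n => ‖u n‖) atTop) :
    opialModulus X c ≤ liminf (fun n => ‖u n - x‖) atTop - 1 := by
  refine csInf_le ⟨-1, ?_⟩ ⟨x, u, hx, hu, hu1, rfl⟩
  rintro _ ⟨y, v, -, -, -, rfl⟩
  linarith [Real.liminf_nonneg fun n => norm_nonneg (v n - y)]

/-- `sInf ∅ = 0`, so a positive modulus needs a vector of norm at least `c`. -/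
lemma nontrivial_of_opialModulus_pos {c : ℝ} (hc : 0 < c) (hr : 0 < opialModulus X c) :
    Nontrivial X := by
  by_contra hX
  rw [not_nontrivial_iff_subsingleton] at hX
  refine hr.ne' ?_
  rw [opialModulus]
  convert Real.sInf_empty
  refine Set.eq_empty_iff_forall_notMem.2 ?_
  rintro _ ⟨x, u, hx, -⟩
  rw [Subsingleton.elim x 0, norm_zero] at hx
  exact hc.not_ge hx

lemma mul_one_add_opialModulus_le {c t M : ℝ} (ht : 0 < t) {x : X} {v : ℕ → X}
    (hx : c * t ≤ ‖x‖) (hv : WeaklyNull v) (hvt : Tendsto (fun k => ‖v k‖) atTop (𝓝 t))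
    (hvM : Tendsto (fun k => ‖v k - x‖) atTop (𝓝 M)) :
    t * (1 + opialModulus X c) ≤ M := by
  have hnorm : Tendsto (fun k => ‖t⁻¹ • v k‖) atTop (𝓝 1) := by
    simpa [norm_smul, abs_of_pos ht, ht.ne'] using hvt.const_mul t⁻¹
  have hdist : Tendsto (fun k => ‖t⁻¹ • v k - t⁻¹ • x‖) atTop (𝓝 (t⁻¹ * M)) := by
    simpa [← smul_sub, norm_smul, abs_of_pos ht] using hvM.const_mul t⁻¹
  have hxc : c ≤ ‖t⁻¹ • x‖ := by
    rw [norm_smul, Real.norm_of_nonneg (inv_nonneg.2 ht.le), ← div_eq_inv_mul, le_div_iff₀ ht]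
    exact hx
  have h := opialModulus_le hxc (hv.const_smul t⁻¹) hnorm.liminf_eq.ge
  rw [hdist.liminf_eq, le_sub_iff_add_le, ← div_eq_inv_mul, le_div_iff₀ ht] at h
  linarith

lemma mul_opialModulus_div_le_of_tendsto {ε R t M : ℝ} (hε : 0 < ε) (hR : 0 < R)
    (hr : 0 ≤ opialModulus X (ε / R)) {x : X} {v : ℕ → X} (hx : ε ≤ ‖x‖) (hv : WeaklyNull v)
    (htR : t ≤ R) (hvt : Tendsto (fun k => ‖v k‖) atTop (𝓝 t))
    (hvM : Tendsto (fun k => ‖v k - x‖) atTop (𝓝 M)) :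
    ε * opialModulus X (ε / R) / (2 + opialModulus X (ε / R)) ≤ M - t := by
  set r := opialModulus X (ε / R)
  have h2r : 0 < 2 + r := by linarith
  rcases le_or_gt (ε / (2 + r)) t with hlarge | hsmall
  · have ht : 0 < t := (div_pos hε h2r).trans_le hlarge
    have hxt : ε / R * t ≤ ‖x‖ :=
      calc ε / R * t ≤ ε / R * R := by gcongr
        _ = ε := div_mul_cancel₀ ε hR.ne'
        _ ≤ ‖x‖ := hx
    have hM := mul_one_add_opialModulus_le ht hxt hv hvt hvM
    calc ε * r / (2 + r) = ε / (2 + r) * r := by ring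
      _ ≤ t * r := by gcongr
      _ ≤ M - t := by linarith
  · have hM : ‖x‖ - t ≤ M :=
      le_of_tendsto_of_tendsto' (tendsto_const_nhds.sub hvt) hvM fun k => by
        rw [norm_sub_rev]; exact norm_sub_norm_le _ _
    calc ε * r / (2 + r) = ε - 2 * (ε / (2 + r)) := by field_simp; ring
      _ ≤ M - t := by linarith

lemma mul_opialModulus_div_le_liminf_sub_liminf {ε R : ℝ} (hε : 0 < ε) (hR : 0 < R)
    (hr : 0 ≤ opialModulus X (ε / R)) {x : X} {u : ℕ → X} (hx : ε ≤ ‖x‖) (hu : WeaklyNull u)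
    (huR : limsup (fun n => ‖u n‖) atTop ≤ R) :
    ε * opialModulus X (ε / R) / (2 + opialModulus X (ε / R)) ≤
      liminf (fun n => ‖u n - x‖) atTop - liminf (fun n => ‖u n‖) atTop := by
  have hdist : Bornology.IsBounded (Set.range fun n => ‖u n - x‖) := by
    simpa only [← Set.range_comp, Function.comp_def, dist_eq_norm] using
      (LipschitzWith.dist_left x).isBounded_image hu.isBounded_range
  have hnorm : Bornology.IsBounded (Set.range fun n => ‖u n‖) := by
    simpa only [← Set.range_comp, Function.comp_def] using
      lipschitzWith_one_norm.isBounded_image hu.isBounded_range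
  obtain ⟨τ, hτ, hdistτ, t, hnormτ, hliminf_le, hle_limsup⟩ := Real.exists_subseq_tendsto_liminf hdist hnorm
  have hsub := mul_opialModulus_div_le_of_tendsto hε hR hr hx (hu.comp_tendsto hτ)
    (hle_limsup.trans huR) hnormτ hdistτ
  linarith

end Moduli

theorem statement1_general (X : Type*) [NormedAddCommGroup X] [NormedSpace ℝ X]
    (ε R : ℝ) (hε : 0 < ε) (hR : 0 < R)
    (hr : 0 < opialModulus X (ε / R)) :
    ε * opialModulus X (ε / R) / (2 + opialModulus X (ε / R)) ≤ etaModulus X ε R := by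
  have : Nontrivial X := nontrivial_of_opialModulus_pos (div_pos hε hR) hr
  obtain ⟨x, hx⟩ := exists_norm_eq X hε.le
  refine le_csInf ⟨ε, x, 0, hx.ge, fun φ => ?_, ?_, ?_⟩ ?_
  · simp
  · simpa using hR.le
  · simp [hx]
  · rintro _ ⟨x, u, hx, hu, huR, rfl⟩
    exact mul_opialModulus_div_le_liminf_sub_liminf hε hR hr.le hx hu huR

/-- For a real Banach space `X` without the Schur property and all `ε, R > 0` with
`r_X(ε/R) > 0`, one has `ε·r_X(ε/R)/(2 + r_X(ε/R)) ≤ η_X(ε,R)`. -/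
theorem statement1 (X : Type*) [NormedAddCommGroup X] [NormedSpace ℝ X] [CompleteSpace X]
    (hX : ¬ SchurProperty X) (ε R : ℝ) (hε : 0 < ε) (hR : 0 < R)
    (hr : 0 < opialModulus X (ε / R)) :
    ε * opialModulus X (ε / R) / (2 + opialModulus X (ε / R)) ≤ etaModulus X ε R :=
  statement1_general X ε R hε hR hr
end

section
/- Let 1 < p < ∞, let I be an infinite index set and let (X_i)_{i∈I} be a family of real Banach spaces such that α := sup{ R([⊕_{i∈J} X_i]_p) : J ⊆ I finite } < 2. Then R([⊕_{i∈I} X_i]_p) < 2. (This is the ℓp-instance of the general theorem for absolute sums; for ℓp with 1 < p < ∞ the hypothesis on the modulus of convexity of the norm of the sum, δ((1 − α/2)²) > 0, holds automatically by uniform convexity.) -/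
open Filter Topology MeasureTheory
open scoped ENNReal ZeroAtInfty

/-!
Fix `x` and a weakly null `uₙ` in the unit ball of `[⊕ Xᵢ]_p`, and `ε > 0`. Choose a finite
`J ⊆ I` such that the truncation `x_J` of `x` to `J` satisfies `‖x - x_J‖ < ε`, and let `vₙ`, `y`
be the restrictions of `uₙ`, `x` to `J`, elements of `[⊕_J Xᵢ]_p`. The `p`-th power of the norm
splits over `J` and its complement, so
`‖uₙ + x_J‖ᵖ = ‖vₙ + y‖ᵖ + ‖uₙ‖ᵖ - ‖vₙ‖ᵖ ≤ ‖vₙ + y‖ᵖ + 1 - ‖vₙ‖ᵖ`.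
Along a subsequence `‖vₙ‖ → a` and `‖vₙ + y‖ → M`; as `vₙ` is weakly null, `M ≤ c := max α 1`,
and also `M ≤ a + 1`. Strict convexity of `t ↦ tᵖ` makes `t ↦ tᵖ - (t - 1)ᵖ` strictly increasing
on `[1, ∞)`, which gives `Mᵖ - aᵖ ≤ cᵖ - (c - 1)ᵖ`. Hence `R([⊕ Xᵢ]_p) ≤ (cᵖ + 1 - (c - 1)ᵖ)^(1/p)`,
and this is `< 2` because `cᵖ - (c - 1)ᵖ < 2ᵖ - 1` for `c < 2`.
-/

namespace lp

variable {I : Type*} {X : I → Type*} [∀ i, NormedAddCommGroup (X i)] {p : ℝ≥0∞} [DecidableEq I]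

theorem coeFn_sum_single (J : Finset I) (f : ∀ i, X i) (i : I) :
    (∑ j ∈ J, lp.single p j (f j) : lp X p) i = if i ∈ J then f i else 0 := by
  rw [coeFn_sum, Finset.sum_apply]
  exact Finset.sum_pi_single _ _ _

variable [Fact (1 ≤ p)]

theorem exists_finset_norm_sub_sum_single_lt (hp : p ≠ ⊤) (x : lp X p) {ε : ℝ} (hε : 0 < ε) :
    ∃ J : Finset I, ‖x - ∑ i ∈ J, lp.single p i (x i)‖ < ε := by
  obtain ⟨J, hJ⟩ := ((lp.hasSum_single hp x).eventually (Metric.ball_mem_nhds x hε)).exists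
  exact ⟨J, by rwa [dist_comm, dist_eq_norm] at hJ⟩

variable [∀ i, NormedSpace ℝ (X i)]

noncomputable def restrictFinset (J : Finset I) : lp X p →L[ℝ] lp (fun j : J => X j) p :=
  ∑ j : J, (singleContinuousLinearMap ℝ (fun j : J => X j) p j).comp (evalCLM ℝ X p j)

theorem restrictFinset_apply (J : Finset I) (f : lp X p) :
    restrictFinset J f = ∑ j : J, lp.single p j (f j) := by
  simp only [restrictFinset, FunLike.coe_sum, Finset.sum_apply,
    ContinuousLinearMap.comp_apply, singleContinuousLinearMap_apply]
  rfl

theorem coeFn_restrictFinset (J : Finset I) (f : lp X p) (j : J) :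
    restrictFinset J f j = f j := by
  rw [restrictFinset_apply, coeFn_sum_single, if_pos (Finset.mem_univ j)]

theorem norm_restrictFinset_rpow (hp : 0 < p.toReal) (J : Finset I) (f : lp X p) :
    ‖restrictFinset J f‖ ^ p.toReal = ∑ i ∈ J, ‖f i‖ ^ p.toReal := by
  rw [restrictFinset_apply, lp.norm_sum_single hp (fun j : J => f j),
    Finset.sum_coe_sort J fun i => ‖f i‖ ^ p.toReal]

theorem norm_rpow_eq_restrictFinset_add_compl (hp : 0 < p.toReal) (J : Finset I) (f : lp X p) :
    ‖f‖ ^ p.toReal =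
      ‖restrictFinset J f‖ ^ p.toReal + ‖f - ∑ i ∈ J, lp.single p i (f i)‖ ^ p.toReal := by
  rw [norm_restrictFinset_rpow hp, lp.norm_compl_sum_single hp]
  ring

theorem norm_restrictFinset_le (hp : 0 < p.toReal) (J : Finset I) (f : lp X p) :
    ‖restrictFinset J f‖ ≤ ‖f‖ := by
  refine (Real.rpow_le_rpow_iff (norm_nonneg _) (norm_nonneg _) hp).1 ?_
  rw [norm_rpow_eq_restrictFinset_add_compl hp J f]
  exact le_add_of_nonneg_right (by positivity)

theorem norm_add_sum_single_rpow (hp : 0 < p.toReal) (J : Finset I) (u x : lp X p) :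
    ‖u + ∑ i ∈ J, lp.single p i (x i)‖ ^ p.toReal =
      ‖restrictFinset J u + restrictFinset J x‖ ^ p.toReal + ‖u‖ ^ p.toReal
        - ‖restrictFinset J u‖ ^ p.toReal := by
  set w := u + ∑ i ∈ J, lp.single p i (x i)
  have hrestrict : restrictFinset J w = restrictFinset J u + restrictFinset J x := by
    rw [map_add]
    congr 1
    ext j
    rw [coeFn_restrictFinset, coeFn_restrictFinset, coeFn_sum_single, if_pos j.2]
  have hcompl : w - ∑ i ∈ J, lp.single p i (w i) = u - ∑ i ∈ J, lp.single p i (u i) := by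
    ext i
    simp only [w, coeFn_sub, coeFn_add, Pi.sub_apply, Pi.add_apply, coeFn_sum_single]
    split_ifs <;> abel
  rw [norm_rpow_eq_restrictFinset_add_compl hp J w, norm_rpow_eq_restrictFinset_add_compl hp J u,
    hrestrict, hcompl]
  ring

theorem norm_add_le_restrictFinset (hp : 0 < p.toReal) (J : Finset I) {u : lp X p} (hu : ‖u‖ ≤ 1)
    (x : lp X p) :
    ‖u + x‖ ≤ (‖restrictFinset J u + restrictFinset J x‖ ^ p.toReal + 1
        - ‖restrictFinset J u‖ ^ p.toReal) ^ p.toReal⁻¹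
      + ‖x - ∑ i ∈ J, lp.single p i (x i)‖ := by
  set xJ := ∑ i ∈ J, lp.single p i (x i)
  have hmain : ‖u + xJ‖ ≤ (‖restrictFinset J u + restrictFinset J x‖ ^ p.toReal + 1
      - ‖restrictFinset J u‖ ^ p.toReal) ^ p.toReal⁻¹ := by
    rw [← Real.rpow_rpow_inv (norm_nonneg (u + xJ)) hp.ne']
    refine Real.rpow_le_rpow (by positivity) ?_ (by positivity)
    rw [norm_add_sum_single_rpow hp J u x]
    have := Real.rpow_le_one (norm_nonneg u) hu hp.le
    linarith
  calc ‖u + x‖ = ‖(u + xJ) + (x - xJ)‖ := by abel_nf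
    _ ≤ ‖u + xJ‖ + ‖x - xJ‖ := norm_add_le _ _
    _ ≤ _ := by gcongr

end lp

theorem strictMonoOn_rpow_sub_rpow_sub_one {q : ℝ} (hq : 1 < q) :
    StrictMonoOn (fun s : ℝ => s ^ q - (s - 1) ^ q) (Set.Ici 1) := by
  intro a (ha : 1 ≤ a) b (hb : 1 ≤ b) hab
  have hf := strictConvexOn_rpow hq
  have hmem : ∀ s : ℝ, 0 ≤ s → s ∈ Set.Ici 0 := fun _ h => h
  -- compare both increments with the slope of the chord from `a - 1` to `b`
  have h1 := hf.secant_strict_mono (hmem (a - 1) (by linarith)) (hmem a (by linarith))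
    (hmem b (by linarith)) (by linarith) (by linarith) hab
  have h2 := hf.secant_strict_mono (hmem b (by linarith)) (hmem (a - 1) (by linarith))
    (hmem (b - 1) (by linarith)) (by linarith) (by linarith) (by linarith)
  rw [sub_sub_cancel, div_one] at h1
  rw [sub_sub_cancel_left, div_neg, div_one, neg_sub, ← neg_div_neg_eq, neg_sub, neg_sub] at h2
  exact h1.trans h2

theorem rpow_sub_rpow_le_rpow_sub_rpow_sub_one {q a c M : ℝ} (hq : 1 < q) (ha : 0 ≤ a)
    (hc : 1 ≤ c) (hM : 0 ≤ M) (hMa : M ≤ a + 1) (hMc : M ≤ c) :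
    M ^ q - a ^ q ≤ c ^ q - (c - 1) ^ q := by
  have hq0 : 0 ≤ q := by linarith
  rcases le_or_gt a (c - 1) with hac | hac
  · have hmono := (strictMonoOn_rpow_sub_rpow_sub_one hq).monotoneOn
      (show 1 ≤ a + 1 by linarith) hc (by linarith)
    simp only [add_sub_cancel_right] at hmono
    linarith [Real.rpow_le_rpow hM hMa hq0]
  · linarith [Real.rpow_le_rpow hM hMc hq0, Real.rpow_le_rpow (by linarith) hac.le hq0]

theorem rpow_add_one_sub_rpow_sub_one_rpow_inv_lt_two {q c : ℝ} (hq : 1 < q) (hc1 : 1 ≤ c)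
    (hc2 : c < 2) : (c ^ q + 1 - (c - 1) ^ q) ^ q⁻¹ < 2 := by
  have hq0 : 0 < q := by linarith
  have hlt := strictMonoOn_rpow_sub_rpow_sub_one hq hc1 (Set.mem_Ici.2 one_le_two) hc2
  norm_num at hlt
  have hbase : 0 ≤ c ^ q + 1 - (c - 1) ^ q := by
    linarith [Real.rpow_le_rpow (by linarith) (sub_le_self c zero_le_one) hq0.le]
  rw [← Real.rpow_lt_rpow_iff (by positivity) zero_le_two hq0, ← Real.rpow_mul hbase]
  rw [inv_mul_cancel₀ hq0.ne', Real.rpow_one]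
  linarith

theorem liminf_le_of_subseq_le_tendsto {f g : ℕ → ℝ} {φ : ℕ → ℕ} {B : ℝ}
    (hφ : Tendsto φ atTop atTop) (hf : IsBoundedUnder (· ≥ ·) atTop f)
    (hg : Tendsto g atTop (𝓝 B)) (hfg : ∀ k, f (φ k) ≤ g k) : liminf f atTop ≤ B := by
  refine le_of_forall_pos_le_add fun δ hδ => liminf_le_of_frequently_le ?_ hf
  refine hφ.frequently (Eventually.frequently ?_)
  filter_upwards [hg.eventually (gt_mem_nhds (lt_add_of_pos_right B hδ))] with k hk
  exact (hfg k).trans hk.le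

section

variable {Y : Type*} [NormedAddCommGroup Y]

theorem liminf_norm_add_le_two {x : Y} {u : ℕ → Y} (hx : ‖x‖ ≤ 1) (hu : ∀ n, ‖u n‖ ≤ 1) :
    liminf (fun n => ‖u n + x‖) atTop ≤ 2 :=
  liminf_le_of_frequently_le (Frequently.of_forall fun n =>
    (norm_add_le _ _).trans (by linarith [hu n])) (isBoundedUnder_of ⟨0, fun _ => norm_nonneg _⟩)

variable [NormedSpace ℝ Y]

theorem weaklyNull_zero : WeaklyNull fun _ : ℕ => (0 : Y) := fun φ => by
  simpa only [map_zero] using tendsto_const_nhds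

theorem WeaklyNull.comp_tendsto_s3 {u : ℕ → Y} (hu : WeaklyNull u) {φ : ℕ → ℕ}
    (hφ : Tendsto φ atTop atTop) : WeaklyNull (u ∘ φ) := fun ψ => (hu ψ).comp hφ

theorem WeaklyNull.map {Z : Type*} [NormedAddCommGroup Z] [NormedSpace ℝ Z] {u : ℕ → Y}
    (hu : WeaklyNull u) (T : Y →L[ℝ] Z) : WeaklyNull (T ∘ u) := fun ψ => hu (ψ.comp T)

theorem liminf_norm_add_le_garciaFalset {x : Y} {u : ℕ → Y} (hx : ‖x‖ ≤ 1) (hu : ∀ n, ‖u n‖ ≤ 1)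
    (hw : WeaklyNull u) : liminf (fun n => ‖u n + x‖) atTop ≤ garciaFalset Y :=
  le_csSup ⟨2, by rintro _ ⟨x, u, hx, hu, -, rfl⟩; exact liminf_norm_add_le_two hx hu⟩
    ⟨x, u, hx, hu, hw, rfl⟩

theorem garciaFalset_le_of_forall {c : ℝ}
    (h : ∀ (x : Y) (u : ℕ → Y), ‖x‖ ≤ 1 → (∀ n, ‖u n‖ ≤ 1) → WeaklyNull u →
      liminf (fun n => ‖u n + x‖) atTop ≤ c) : garciaFalset Y ≤ c :=
  csSup_le ⟨_, 0, fun _ => 0, by simp, fun _ => by simp, weaklyNull_zero, rfl⟩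
    fun _ ⟨x, u, hx, hu, hw, hL⟩ => hL ▸ h x u hx hu hw

theorem garciaFalset_le_two : garciaFalset Y ≤ 2 :=
  garciaFalset_le_of_forall fun _ _ hx hu _ => liminf_norm_add_le_two hx hu

end

theorem liminf_norm_add_le_of_forall_finset {I : Type*} {X : I → Type*}
    [∀ i, NormedAddCommGroup (X i)] [∀ i, NormedSpace ℝ (X i)] {p : ℝ≥0∞} [Fact (1 ≤ p)]
    (hq : 1 < p.toReal) {c : ℝ} (hc : 1 ≤ c)
    (hfin : ∀ J : Finset I, garciaFalset (lp (fun j : J => X j) p) ≤ c)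
    {x : lp X p} {u : ℕ → lp X p} (hx : ‖x‖ ≤ 1) (hu : ∀ n, ‖u n‖ ≤ 1) (hw : WeaklyNull u) :
    liminf (fun n => ‖u n + x‖) atTop ≤ (c ^ p.toReal + 1 - (c - 1) ^ p.toReal) ^ p.toReal⁻¹ := by
  classical
  have hp : p ≠ ⊤ := by rintro rfl; norm_num at hq
  set q := p.toReal
  have hq0 : 0 < q := by linarith
  refine le_of_forall_pos_le_add fun ε hε => ?_
  obtain ⟨J, hJ⟩ := lp.exists_finset_norm_sub_sum_single_lt hp x hε
  set R : lp X p →L[ℝ] lp (fun j : J => X j) p := lp.restrictFinset J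
  have hv : ∀ n, ‖R (u n)‖ ≤ 1 := fun n => (lp.norm_restrictFinset_le hq0 J _).trans (hu n)
  have hy : ‖R x‖ ≤ 1 := (lp.norm_restrictFinset_le hq0 J _).trans hx
  obtain ⟨⟨a, M⟩, ⟨ha : a ∈ Set.Icc 0 1, hM : M ∈ Set.Icc 0 2⟩, φ, hφ, hlim⟩ :=
    (isCompact_Icc.prod isCompact_Icc).tendsto_subseq (s := Set.Icc (0 : ℝ) 1 ×ˢ Set.Icc (0 : ℝ) 2)
      (x := fun n => (‖R (u n)‖, ‖R (u n) + R x‖)) fun n =>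
        ⟨⟨norm_nonneg _, hv n⟩, norm_nonneg _, (norm_add_le _ _).trans (by linarith [hv n])⟩
  have hr : Tendsto (fun k => ‖R (u (φ k))‖) atTop (𝓝 a) := (continuous_fst.tendsto _).comp hlim
  have hs : Tendsto (fun k => ‖R (u (φ k)) + R x‖) atTop (𝓝 M) :=
    (continuous_snd.tendsto _).comp hlim
  have hMc : M ≤ c := by
    rw [← hs.liminf_eq]
    exact (liminf_norm_add_le_garciaFalset hy (fun k => hv (φ k))
      ((hw.map R).comp_tendsto_s3 hφ.tendsto_atTop)).trans (hfin J)
  have hMa : M ≤ a + 1 := le_of_tendsto_of_tendsto' hs (hr.add_const 1) fun k =>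
    (norm_add_le _ _).trans (by linarith)
  have hgap := rpow_sub_rpow_le_rpow_sub_rpow_sub_one hq ha.1 hc hM.1 hMa hMc
  have hlimit : Tendsto (fun k => (‖R (u (φ k)) + R x‖ ^ q + 1 - ‖R (u (φ k))‖ ^ q) ^ q⁻¹ + ε)
      atTop (𝓝 ((M ^ q + 1 - a ^ q) ^ q⁻¹ + ε)) :=
    ((((hs.rpow_const (Or.inr hq0.le)).add_const 1).sub (hr.rpow_const (Or.inr hq0.le))).rpow_const
      (Or.inr (inv_nonneg.2 hq0.le))).add_const ε
  have hpointwise : ∀ k, ‖u (φ k) + x‖ ≤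
      (‖R (u (φ k)) + R x‖ ^ q + 1 - ‖R (u (φ k))‖ ^ q) ^ q⁻¹ + ε := fun k =>
    (lp.norm_add_le_restrictFinset hq0 J (hu _) x).trans (by linarith)
  refine (liminf_le_of_subseq_le_tendsto hφ.tendsto_atTop
    (isBoundedUnder_of ⟨0, fun _ => norm_nonneg _⟩) hlimit hpointwise).trans ?_
  have hbase : 0 ≤ M ^ q + 1 - a ^ q := by
    linarith [Real.rpow_nonneg hM.1 q, Real.rpow_le_one ha.1 ha.2 hq0.le]
  linarith [Real.rpow_le_rpow hbase (show M ^ q + 1 - a ^ q ≤ c ^ q + 1 - (c - 1) ^ q by linarith)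
    (inv_nonneg.2 hq0.le)]

theorem statement3_general (p : ℝ≥0∞) [Fact (1 ≤ p)] (hp1 : 1 < p) (hp2 : p ≠ ⊤)
    {I : Type*} (X : I → Type*) [∀ i, NormedAddCommGroup (X i)]
    [∀ i, NormedSpace ℝ (X i)]
    (hα : sSup { a : ℝ | ∃ J : Finset I, a = garciaFalset (lp (fun j : J => X j) p) } < 2) :
    garciaFalset (lp X p) < 2 := by
  have hq : 1 < p.toReal := by
    simpa using (ENNReal.toReal_lt_toReal ENNReal.one_ne_top hp2).2 hp1
  set S : Set ℝ := { a : ℝ | ∃ J : Finset I, a = garciaFalset (lp (fun j : J => X j) p) }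
  set c := max (sSup S) 1
  have hfin : ∀ J : Finset I, garciaFalset (lp (fun j : J => X j) p) ≤ c := fun J =>
    (le_csSup (s := S) ⟨2, by rintro _ ⟨J', rfl⟩; exact garciaFalset_le_two⟩ ⟨J, rfl⟩).trans
      (le_max_left _ _)
  calc garciaFalset (lp X p) ≤ (c ^ p.toReal + 1 - (c - 1) ^ p.toReal) ^ p.toReal⁻¹ :=
        garciaFalset_le_of_forall fun _ _ hx hu hw =>
          liminf_norm_add_le_of_forall_finset hq (le_max_right _ _) hfin hx hu hw
    _ < 2 := rpow_add_one_sub_rpow_sub_one_rpow_inv_lt_two hq (le_max_right _ _)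
        (max_lt hα one_lt_two)

/-- If `1 < p < ∞`, `I` is infinite and the García-Falset coefficients of all finite ℓᵖ-subsums
have supremum `α < 2`, then the García-Falset coefficient of the full ℓᵖ-sum is `< 2`. -/
theorem statement3 (p : ℝ≥0∞) [Fact (1 ≤ p)] (hp1 : 1 < p) (hp2 : p ≠ ⊤)
    {I : Type*} [Infinite I] (X : I → Type*) [∀ i, NormedAddCommGroup (X i)]
    [∀ i, NormedSpace ℝ (X i)] [∀ i, CompleteSpace (X i)]
    (hα : sSup { a : ℝ | ∃ J : Finset I, a = garciaFalset (lp (fun j : J => X j) p) } < 2) :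
    garciaFalset (lp X p) < 2 :=
  statement3_general p hp1 hp2 X hα
end

section
/- Let 1 < p < ∞ and let (I_k)_{k∈K} be any family of nonempty sets. Then R([⊕_{k∈K} c0(I_k)]_p) < 2. -/
open Filter Topology MeasureTheory
open scoped ENNReal ZeroAtInfty

/-!
A weakly null sequence `uₙ` in `[⊕ c₀(I k)]_p` is null in every coordinate. Truncate `x` to a
finitely supported `y` on a finite set `F` of blocks. In a block `k ∈ F`, `y k` is below `c` off a
finite set of points, where `uₙ k` is eventually below `c`; hence
`‖uₙ k + y k‖ ≤ max ‖uₙ k‖ ‖y k‖ + c` eventually, and so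
`‖uₙ k + y k‖ ^ p ≤ ‖uₙ k‖ ^ p + ‖y k‖ ^ p + o(1)`. Outside `F` the blocks of `uₙ + y` are those of
`uₙ`. Summing, `‖uₙ + y‖ ^ p ≤ ‖uₙ‖ ^ p + ‖y‖ ^ p + o(1) ≤ 2 + o(1)`, so `R ≤ 2 ^ (1 / p) < 2`.
-/

lemma add_rpow_le_rpow_add_mul {q a b : ℝ} (hq : 1 ≤ q) (ha : 0 ≤ a) (hb : 0 ≤ b) :
    (a + b) ^ q ≤ a ^ q + (a + b + 1) ^ q * b := by
  rcases hb.eq_or_lt with rfl | hb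
  · simp
  -- convexity: slope on `[a, a + b]` ≤ slope on `[a + b, a + b + 1]` ≤ `(a + b + 1) ^ q`
  have hslope := (convexOn_rpow hq).slope_mono_adjacent (x := a) (y := a + b) (z := a + b + 1)
    ha (Set.mem_Ici.mpr (by positivity)) (by linarith) (by linarith)
  rw [add_sub_cancel_left, add_sub_cancel_left, div_one, div_le_iff₀ hb] at hslope
  nlinarith [Real.rpow_nonneg (by linarith : 0 ≤ a + b) q]

lemma max_rpow_le_rpow_add_rpow {q a b : ℝ} (hq : 0 ≤ q) (ha : 0 ≤ a) (hb : 0 ≤ b) :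
    max a b ^ q ≤ a ^ q + b ^ q := by
  rw [Real.rpow_max ha hb hq]
  exact max_le_add_of_nonneg (Real.rpow_nonneg ha q) (Real.rpow_nonneg hb q)

namespace ZeroAtInftyContinuousMap

variable {α β : Type*} [TopologicalSpace α] [NormedAddCommGroup β]

lemma norm_apply_le (f : C₀(α, β)) (i : α) : ‖f i‖ ≤ ‖f‖ :=
  norm_toBCF_eq_norm (f := f) ▸ f.toBCF.norm_coe_le_norm i

variable (𝕜 : Type*) [NormedField 𝕜] [NormedSpace 𝕜 β]

noncomputable def evalCLM (i : α) : C₀(α, β) →L[𝕜] β :=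
  LinearMap.mkContinuous
    { toFun := fun f => f i
      map_add' := fun _ _ => rfl
      map_smul' := fun _ _ => rfl } 1
    fun f => by simpa using f.norm_apply_le i

variable [DiscreteTopology α] {v : ℕ → C₀(α, β)}

lemma eventually_norm_add_le_max_add (x : C₀(α, β))
    (hv : ∀ i, Tendsto (fun n => v n i) atTop (𝓝 0)) {c : ℝ} (hc : 0 < c) :
    ∀ᶠ n in atTop, ‖v n + x‖ ≤ max ‖v n‖ ‖x‖ + c := by
  have hlarge : {i | c ≤ ‖x i‖}.Finite := by
    have hx := tendsto_zero_iff_norm_tendsto_zero.1 (zero_at_infty x)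
    rw [cocompact_eq_cofinite] at hx
    simpa only [not_lt] using Filter.eventually_cofinite.1 (hx.eventually (gt_mem_nhds hc))
  have hsmall : ∀ᶠ n in atTop, ∀ i ∈ {i | c ≤ ‖x i‖}, ‖v n i‖ ≤ c :=
    (eventually_all_finite hlarge).2 fun i _ =>
      (tendsto_zero_iff_norm_tendsto_zero.1 (hv i)).eventually (ge_mem_nhds hc)
  filter_upwards [hsmall] with n hn
  rw [← norm_toBCF_eq_norm]
  refine (BoundedContinuousFunction.norm_le (by positivity)).2 fun i => ?_
  refine (norm_add_le (v n i) (x i)).trans ?_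
  by_cases hi : c ≤ ‖x i‖
  · linarith [hn i hi, x.norm_apply_le i, le_max_right ‖v n‖ ‖x‖]
  · linarith [(v n).norm_apply_le i, le_max_left ‖v n‖ ‖x‖]

lemma eventually_norm_add_rpow_le {q : ℝ} (hq : 1 ≤ q) {x : C₀(α, β)} (hx : ‖x‖ ≤ 1)
    (hv1 : ∀ n, ‖v n‖ ≤ 1) (hv : ∀ i, Tendsto (fun n => v n i) atTop (𝓝 0)) {δ : ℝ}
    (hδ : 0 < δ) : ∀ᶠ n in atTop, ‖v n + x‖ ^ q ≤ ‖v n‖ ^ q + ‖x‖ ^ q + δ := by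
  set c := min 1 (δ / 3 ^ q)
  have hc : 0 < c := lt_min one_pos (by positivity)
  have hcδ : 3 ^ q * c ≤ δ := (le_div_iff₀' (by positivity)).1 (min_le_right _ _)
  filter_upwards [eventually_norm_add_le_max_add x hv hc] with n hn
  have hmax : max ‖v n‖ ‖x‖ ≤ 1 := max_le (hv1 n) hx
  calc ‖v n + x‖ ^ q ≤ (max ‖v n‖ ‖x‖ + c) ^ q := by gcongr
    _ ≤ max ‖v n‖ ‖x‖ ^ q + (max ‖v n‖ ‖x‖ + c + 1) ^ q * c :=
      add_rpow_le_rpow_add_mul hq (by positivity) hc.le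
    _ ≤ max ‖v n‖ ‖x‖ ^ q + 3 ^ q * c := by
      gcongr
      linarith [min_le_left 1 (δ / 3 ^ q)]
    _ ≤ ‖v n‖ ^ q + ‖x‖ ^ q + δ := by
      linarith [max_rpow_le_rpow_add_rpow (by linarith : 0 ≤ q) (norm_nonneg (v n)) (norm_nonneg x)]

end ZeroAtInftyContinuousMap

namespace lp

variable {K : Type*} {E : K → Type*} [∀ k, NormedAddCommGroup (E k)] {p : ℝ≥0∞}

lemma norm_add_rpow_le_of_finset (hp : 0 < p.toReal) (u y : lp E p) (F : Finset K)
    (hy : ∀ k ∉ F, y k = 0) {δ : ℝ}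
    (h : ∀ k ∈ F, ‖u k + y k‖ ^ p.toReal ≤ ‖u k‖ ^ p.toReal + ‖y k‖ ^ p.toReal + δ) :
    ‖u + y‖ ^ p.toReal ≤ ‖u‖ ^ p.toReal + ‖y‖ ^ p.toReal + F.card * δ := by
  classical
  have hδ : HasSum (fun k => if k ∈ F then δ else 0) (F.card * δ) := by
    simpa using hasSum_sum_of_ne_finset_zero (s := F) (f := fun k => if k ∈ F then δ else 0)
      fun k hk => if_neg hk
  refine hasSum_le (fun k => ?_) (hasSum_norm hp (u + y))
    (((hasSum_norm hp u).add (hasSum_norm hp y)).add hδ)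
  by_cases hk : k ∈ F
  · simpa [hk] using h k hk
  · simp [hk, hy k hk, Real.zero_rpow hp.ne']

lemma exists_finset_norm_sub_lt [Fact (1 ≤ p)] (hp : p ≠ ⊤) (x : lp E p) {ε : ℝ} (hε : 0 < ε) :
    ∃ (F : Finset K) (y : lp E p), (∀ k ∉ F, y k = 0) ∧ ‖y‖ ≤ ‖x‖ ∧ ‖x - y‖ < ε := by
  classical
  obtain ⟨F, hF⟩ := ((lp.hasSum_single hp x).eventually (Metric.ball_mem_nhds x hε)).exists
  refine ⟨F, ∑ k ∈ F, lp.single p k (x k), fun k hk => ?_, ?_, ?_⟩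
  · rw [coeFn_sum, Finset.sum_apply]
    exact Finset.sum_eq_zero fun i hi => lp.single_apply_ne p i _ (ne_of_mem_of_not_mem hi hk).symm
  · have hp0 : 0 < p.toReal := ENNReal.toReal_pos (zero_lt_one.trans_le Fact.out).ne' hp
    rw [← Real.rpow_le_rpow_iff (norm_nonneg _) (norm_nonneg _) hp0, lp.norm_sum_single hp0]
    exact sum_rpow_le_norm_rpow hp0 x F
  · rwa [← dist_eq_norm, dist_comm]

end lp

section WeaklyNull

variable {X Y : Type*} [NormedAddCommGroup X] [NormedSpace ℝ X] [NormedAddCommGroup Y]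
  [NormedSpace ℝ Y]

lemma WeaklyNull.map_s6 {u : ℕ → X} (hu : WeaklyNull u) (T : X →L[ℝ] Y) :
    WeaklyNull fun n => T (u n) :=
  fun φ => hu (φ.comp T)

lemma WeaklyNull.tendsto_zero {u : ℕ → ℝ} (hu : WeaklyNull u) : Tendsto u atTop (𝓝 0) :=
  hu (ContinuousLinearMap.id ℝ ℝ)

variable {K : Type*} {I : K → Type*} [∀ k, TopologicalSpace (I k)] {p : ℝ≥0∞} [Fact (1 ≤ p)]

lemma WeaklyNull.tendsto_apply_apply {u : ℕ → lp (fun k => C₀(I k, ℝ)) p} (hu : WeaklyNull u)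
    (k : K) (i : I k) : Tendsto (fun n => u n k i) atTop (𝓝 0) :=
  (hu.map_s6 ((ZeroAtInftyContinuousMap.evalCLM ℝ i).comp (lp.evalCLM ℝ _ p k))).tendsto_zero

end WeaklyNull

namespace lp

variable {K : Type*} {I : K → Type*} [∀ k, TopologicalSpace (I k)] [∀ k, DiscreteTopology (I k)]
  {p : ℝ≥0∞} [Fact (1 ≤ p)] {u : ℕ → lp (fun k => C₀(I k, ℝ)) p} {x : lp (fun k => C₀(I k, ℝ)) p}

lemma eventually_norm_add_le_of_forall_tendsto (hp : p ≠ ⊤) (hx : ‖x‖ ≤ 1) (hu1 : ∀ n, ‖u n‖ ≤ 1)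
    (hu : ∀ k i, Tendsto (fun n => u n k i) atTop (𝓝 0)) {ε : ℝ} (hε : 0 < ε) :
    ∀ᶠ n in atTop, ‖u n + x‖ ≤ (2 + ε) ^ p.toReal⁻¹ + ε := by
  set q := p.toReal
  have hq : 1 ≤ q := by simpa using ENNReal.toReal_mono hp (Fact.out : 1 ≤ p)
  have hp0 : p ≠ 0 := (zero_lt_one.trans_le Fact.out).ne'
  obtain ⟨F, y, hyF, hyx, hxy⟩ := exists_finset_norm_sub_lt hp x hε
  have hy : ‖y‖ ≤ 1 := hyx.trans hx
  have hδ : (F.card : ℝ) * (ε / (F.card + 1)) ≤ ε := by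
    rw [mul_div_left_comm]
    exact mul_le_of_le_one_right hε.le ((div_le_one (by positivity)).2 (by linarith))
  have hblocks : ∀ᶠ n in atTop, ∀ k ∈ F,
      ‖u n k + y k‖ ^ q ≤ ‖u n k‖ ^ q + ‖y k‖ ^ q + ε / (F.card + 1) :=
    (eventually_all_finset F).2 fun k _ =>
      ZeroAtInftyContinuousMap.eventually_norm_add_rpow_le hq
        ((norm_apply_le_norm hp0 y k).trans hy)
        (fun n => (norm_apply_le_norm hp0 (u n) k).trans (hu1 n)) (hu k) (by positivity)
  filter_upwards [hblocks] with n hn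
  have hsum : ‖u n + y‖ ^ q ≤ 2 + ε := by
    linarith [norm_add_rpow_le_of_finset (by positivity) (u n) y F hyF hn,
      Real.rpow_le_one (norm_nonneg _) (hu1 n) (by positivity : 0 ≤ q),
      Real.rpow_le_one (norm_nonneg _) hy (by positivity : 0 ≤ q)]
  calc ‖u n + x‖ = ‖(u n + y) + (x - y)‖ := by abel_nf
    _ ≤ ‖u n + y‖ + ‖x - y‖ := norm_add_le _ _
    _ ≤ (2 + ε) ^ q⁻¹ + ε :=
      add_le_add ((Real.le_rpow_inv_iff_of_pos (norm_nonneg _) (by positivity)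
        (by positivity)).2 hsum) hxy.le

lemma liminf_norm_add_le_of_forall_tendsto (hp : p ≠ ⊤) (hx : ‖x‖ ≤ 1) (hu1 : ∀ n, ‖u n‖ ≤ 1)
    (hu : ∀ k i, Tendsto (fun n => u n k i) atTop (𝓝 0)) :
    liminf (fun n => ‖u n + x‖) atTop ≤ 2 ^ p.toReal⁻¹ := by
  have hlim : Tendsto (fun ε : ℝ => (2 + ε) ^ p.toReal⁻¹ + ε) (𝓝[>] 0)
      (𝓝 (2 ^ p.toReal⁻¹)) := by
    have hcont : ContinuousAt (fun ε : ℝ => (2 + ε) ^ p.toReal⁻¹ + ε) 0 := by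
      fun_prop (disch := norm_num)
    simpa using hcont.tendsto.mono_left nhdsWithin_le_nhds
  refine ge_of_tendsto hlim (eventually_nhdsWithin_of_forall fun ε hε => ?_)
  exact liminf_le_of_frequently_le
    (eventually_norm_add_le_of_forall_tendsto hp hx hu1 hu hε).frequently
    (isBoundedUnder_of ⟨0, fun n => norm_nonneg _⟩)

end lp

theorem statement6_general (p : ℝ≥0∞) [Fact (1 ≤ p)] (hp1 : 1 < p) (hp2 : p ≠ ⊤)
    {K : Type*} (I : K → Type*) [∀ k, TopologicalSpace (I k)] [∀ k, DiscreteTopology (I k)] :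
    garciaFalset (lp (fun k => C₀(I k, ℝ)) p) < 2 := by
  have hq : 1 < p.toReal := by simpa using ENNReal.toReal_strict_mono hp2 hp1
  refine (Real.sSup_le ?_ (by positivity)).trans_lt
    (Real.rpow_lt_self_of_one_lt one_lt_two (inv_lt_one_of_one_lt₀ hq))
  rintro a ⟨x, u, hx, hu1, hu, rfl⟩
  exact lp.liminf_norm_add_le_of_forall_tendsto hp2 hx hu1 hu.tendsto_apply_apply

/-- For `1 < p < ∞` and any family of nonempty discrete sets `(I k)`, the García-Falset
coefficient of the ℓᵖ-sum of the spaces `c₀(I k)` is `< 2`. -/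
theorem statement6 (p : ℝ≥0∞) [Fact (1 ≤ p)] (hp1 : 1 < p) (hp2 : p ≠ ⊤)
    {K : Type*} (I : K → Type*) [∀ k, TopologicalSpace (I k)] [∀ k, DiscreteTopology (I k)]
    [∀ k, Nonempty (I k)] :
    garciaFalset (lp (fun k => C₀(I k, ℝ)) p) < 2 :=
  statement6_general p hp1 hp2 I
end

section
/- Let N be a strictly monotone, absolute, normalised norm on ℝ^m and let X_1, …, X_m be real Banach spaces each having the Opial property. Then the E-sum [⊕_{i=1}^m X_i]_E has the Opial property; explicitly, whenever for each i = 1,…,m the sequence (x_{n,i})_{n∈ℕ} is weakly null in X_i, and (y_1, …, y_m) with y_i ∈ X_i is not the zero element, then limsup_n N(‖x_{n,1}‖, …, ‖x_{n,m}‖) < limsup_n N(‖x_{n,1} − y_1‖, …, ‖x_{n,m} − y_m‖). -/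
open Filter Topology MeasureTheory
open scoped ENNReal ZeroAtInfty

/-!
Weakly null sequences are bounded, so along a subsequence realising the limsup on the left the
coordinate norms `‖x i n‖` and `‖x i n - y i‖` converge, to `a i` and `b i` say. The Opial
property of each `X i` gives `a ≤ b`, with `a j < b j` wherever `y j ≠ 0`. An absolute norm is
monotone on the positive cone, and here strictly so; hence the left limsup `N a` is below
`N b`, which is a cluster value of the sequence on the right.
-/

open Function Set

theorem WeaklyNull.comp_strictMono {E : Type*} [NormedAddCommGroup E] [NormedSpace ℝ E]
    {u : ℕ → E} (hu : WeaklyNull u) {φ : ℕ → ℕ} (hφ : StrictMono φ) : WeaklyNull (u ∘ φ) :=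
  fun ξ => (hu ξ).comp hφ.tendsto_atTop

/-- Uniform boundedness, applied to the image of `u` in the bidual. -/
theorem WeaklyNull.exists_forall_norm_le {E : Type*} [NormedAddCommGroup E] [NormedSpace ℝ E]
    {u : ℕ → E} (hu : WeaklyNull u) : ∃ C, ∀ n, ‖u n‖ ≤ C := by
  obtain ⟨C, hC⟩ := banach_steinhaus (g := fun n => NormedSpace.inclusionInDoubleDual ℝ E (u n))
    fun ξ => let ⟨C, hC⟩ := (hu ξ).norm.bddAbove_range; ⟨C, fun n => hC (mem_range_self n)⟩
  exact ⟨C, fun n => (NormedSpace.inclusionInDoubleDualLi ℝ).norm_map (u n) ▸ hC n⟩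

def OpialProperty (X : Type*) [NormedAddCommGroup X] [NormedSpace ℝ X] : Prop :=
  ∀ u : ℕ → X, WeaklyNull u → ∀ z : X, z ≠ 0 →
    limsup (fun n => ‖u n‖) atTop < limsup (fun n => ‖u n - z‖) atTop

namespace OpialProperty

variable {X : Type*} [NormedAddCommGroup X] [NormedSpace ℝ X] {u : ℕ → X} {z : X} {a b : ℝ}

theorem lt_of_tendsto (hX : OpialProperty X) (hu : WeaklyNull u) (hz : z ≠ 0)
    (ha : Tendsto (fun n => ‖u n‖) atTop (𝓝 a)) (hb : Tendsto (fun n => ‖u n - z‖) atTop (𝓝 b)) :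
    a < b := by
  simpa only [ha.limsup_eq, hb.limsup_eq] using hX u hu z hz

theorem le_of_tendsto (hX : OpialProperty X) (hu : WeaklyNull u)
    (ha : Tendsto (fun n => ‖u n‖) atTop (𝓝 a)) (hb : Tendsto (fun n => ‖u n - z‖) atTop (𝓝 b)) :
    a ≤ b := by
  rcases eq_or_ne z 0 with rfl | hz
  · simp only [sub_zero] at hb
    exact (tendsto_nhds_unique ha hb).le
  · exact (hX.lt_of_tendsto hu hz ha hb).le

end OpialProperty

theorem exists_strictMono_tendsto_limsup_and_tendsto {α E : Type*}
    [ConditionallyCompleteLinearOrder α] [TopologicalSpace α] [OrderTopology α]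
    [FirstCountableTopology α] [TopologicalSpace E] [FirstCountableTopology E] {u : ℕ → α}
    (hu : IsCoboundedUnder (· ≤ ·) atTop u) (hu' : IsBoundedUnder (· ≤ ·) atTop u)
    {K : Set E} (hK : IsCompact K) {v : ℕ → E} (hv : ∀ n, v n ∈ K) :
    ∃ φ : ℕ → ℕ, StrictMono φ ∧ Tendsto (u ∘ φ) atTop (𝓝 (limsup u atTop)) ∧
      ∃ e ∈ K, Tendsto (v ∘ φ) atTop (𝓝 e) := by
  obtain ⟨φ, hφ, hu_φ⟩ := (MapClusterPt.limsup hu hu').tendsto_subseq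
  obtain ⟨e, he, ψ, hψ, hv_ψ⟩ := hK.tendsto_subseq fun n => hv (φ n)
  exact ⟨φ ∘ ψ, hφ.comp hψ, hu_φ.comp hψ.tendsto_atTop, e, he, hv_ψ⟩

namespace Seminorm

variable {ι : Type*}

theorem continuous_of_finite [Fintype ι] (p : Seminorm ℝ (ι → ℝ)) : Continuous p :=
  continuousOn_univ.mp (p.convexOn.continuousOn isOpen_univ)

variable [DecidableEq ι] {p : Seminorm ℝ (ι → ℝ)}

/-- `update b j t` lies on the segment from `b` to its reflection in the `j`-th coordinate,
and `p` takes the same value at both ends. -/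
theorem apply_update_le (habs : ∀ a b : ι → ℝ, (∀ i, |a i| = |b i|) → p a = p b)
    (b : ι → ℝ) (j : ι) {t : ℝ} (ht : |t| ≤ |b j|) : p (update b j t) ≤ p b := by
  obtain ⟨θ₁, θ₂, hθ₁, hθ₂, hθ, rfl⟩ : t ∈ segment ℝ (-b j) (b j) := by
    rw [segment_eq_uIcc, mem_uIcc]
    rcases le_total 0 (b j) with hb | hb
    · rw [abs_of_nonneg hb, abs_le] at ht
      exact .inl ht
    · rw [abs_of_nonpos hb, abs_le, neg_neg] at ht
      exact .inr ht
  have hreflect : p (update b j (-b j)) = p b :=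
    habs _ _ fun i => by rcases eq_or_ne i j with rfl | hi <;> simp [*]
  have hcomb : update b j (θ₁ • -b j + θ₂ • b j) = θ₁ • update b j (-b j) + θ₂ • b := by
    ext i
    rcases eq_or_ne i j with rfl | hi
    · simp
    · simp [hi, ← add_mul, hθ]
  calc p (update b j (θ₁ • -b j + θ₂ • b j))
      ≤ θ₁ * p (update b j (-b j)) + θ₂ * p b :=
        hcomb ▸ p.convexOn.2 (mem_univ _) (mem_univ _) hθ₁ hθ₂ hθ
    _ = p b := by rw [hreflect, ← add_mul, hθ, one_mul]

variable [Fintype ι]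

theorem apply_le_apply_of_abs_le (habs : ∀ a b : ι → ℝ, (∀ i, |a i| = |b i|) → p a = p b)
    {a b : ι → ℝ} (h : ∀ i, |a i| ≤ |b i|) : p a ≤ p b := by
  suffices ∀ s : Finset ι, p (s.piecewise a b) ≤ p b by simpa using this Finset.univ
  intro s
  induction s using Finset.induction_on with
  | empty => simp
  | insert j s hj ih =>
    rw [Finset.piecewise_insert]
    refine (apply_update_le habs _ j ?_).trans ih
    rw [Finset.piecewise_eq_of_notMem _ _ _ hj]
    exact h j

theorem apply_le_apply_of_nonneg (habs : ∀ a b : ι → ℝ, (∀ i, |a i| = |b i|) → p a = p b)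
    {a b : ι → ℝ} (ha : 0 ≤ a) (hab : a ≤ b) : p a ≤ p b :=
  apply_le_apply_of_abs_le habs fun i => abs_le_abs_of_nonneg (ha i) (hab i)

theorem apply_lt_apply_of_nonneg (habs : ∀ a b : ι → ℝ, (∀ i, |a i| = |b i|) → p a = p b)
    (hstrict : ∀ a b : ι → ℝ, p a = p b → (∀ i, |a i| ≤ |b i|) → ∀ i, |a i| = |b i|)
    {a b : ι → ℝ} (ha : 0 ≤ a) (hab : a < b) : p a < p b := by
  obtain ⟨hle, j, hj⟩ := Pi.lt_def.mp hab
  have hb : 0 ≤ b := ha.trans hle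
  refine (apply_le_apply_of_nonneg habs ha hle).lt_of_ne fun h => hj.ne ?_
  simpa [abs_of_nonneg (ha j), abs_of_nonneg (hb j)] using
    hstrict a b h (fun i => abs_le_abs_of_nonneg (ha i) (hle i)) j

theorem limsup_lt_limsup (habs : ∀ a b : ι → ℝ, (∀ i, |a i| = |b i|) → p a = p b)
    (hstrict : ∀ a b : ι → ℝ, p a = p b → (∀ i, |a i| ≤ |b i|) → ∀ i, |a i| = |b i|)
    {u v : ℕ → ι → ℝ} {c : ι → ℝ} (hu : ∀ n, u n ∈ Icc 0 c) (hv : ∀ n, v n ∈ Icc 0 c)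
    (huv : ∀ φ : ℕ → ℕ, StrictMono φ → ∀ a b, Tendsto (u ∘ φ) atTop (𝓝 a) →
      Tendsto (v ∘ φ) atTop (𝓝 b) → a < b) :
    limsup (fun n => p (u n)) atTop < limsup (fun n => p (v n)) atTop := by
  have hbdd {w : ℕ → ι → ℝ} (hw : ∀ n, w n ∈ Icc 0 c) :
      IsBoundedUnder (· ≤ ·) atTop fun n => p (w n) :=
    isBoundedUnder_of ⟨p c, fun n => apply_le_apply_of_nonneg habs (hw n).1 (hw n).2⟩
  obtain ⟨φ, hφ, hu_lim, ⟨a, b⟩, ⟨⟨ha₀, -⟩, -⟩, hlim⟩ :=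
    exists_strictMono_tendsto_limsup_and_tendsto
      (isCoboundedUnder_le_of_le atTop fun n => apply_nonneg p (u n)) (hbdd hu)
      (isCompact_Icc.prod isCompact_Icc) fun n => mk_mem_prod (hu n) (hv n)
  have hp := p.continuous_of_finite
  calc limsup (fun n => p (u n)) atTop = p a :=
        tendsto_nhds_unique hu_lim ((hp.tendsto a).comp hlim.fst_nhds)
    _ < p b := apply_lt_apply_of_nonneg habs hstrict ha₀
        (huv φ hφ a b hlim.fst_nhds hlim.snd_nhds)
    _ ≤ limsup (fun n => p (v n)) atTop :=
        (MapClusterPt.of_comp hφ.tendsto_atTop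
          ((hp.tendsto b).comp hlim.snd_nhds).mapClusterPt).le_limsup (hbdd hv)

end Seminorm

theorem statement11_general (m : ℕ) (N : (Fin m → ℝ) → ℝ)
    (hadd : ∀ a b : Fin m → ℝ, N (a + b) ≤ N a + N b)
    (hhom : ∀ (c : ℝ) (a : Fin m → ℝ), N (c • a) = |c| * N a)
    (habs : ∀ a b : Fin m → ℝ, (∀ i, |a i| = |b i|) → N a = N b)
    (hstrictmono : ∀ a b : Fin m → ℝ, N a = N b → (∀ i, |a i| ≤ |b i|) → ∀ i, |a i| = |b i|)
    (X : Fin m → Type*) [∀ i, NormedAddCommGroup (X i)] [∀ i, NormedSpace ℝ (X i)]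
    (hOp : ∀ i, ∀ u : ℕ → X i, WeaklyNull u → ∀ z : X i, z ≠ 0 →
      limsup (fun n => ‖u n‖) atTop < limsup (fun n => ‖u n - z‖) atTop)
    (x : ∀ i, ℕ → X i) (hx : ∀ i, WeaklyNull (x i)) (y : ∀ i, X i) (hy : y ≠ 0) :
    limsup (fun n => N fun i => ‖x i n‖) atTop <
      limsup (fun n => N fun i => ‖x i n - y i‖) atTop := by
  let p : Seminorm ℝ (Fin m → ℝ) := .of N hadd fun c a => by simpa using hhom c a
  choose C hC using fun i => (hx i).exists_forall_norm_le
  have hxC (i n) : ‖x i n‖ ≤ C i + ‖y i‖ := (hC i n).trans (le_add_of_nonneg_right (norm_nonneg _))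
  have hxyC (i n) : ‖x i n - y i‖ ≤ C i + ‖y i‖ := (norm_sub_le _ _).trans (by gcongr; exact hC i n)
  refine p.limsup_lt_limsup habs hstrictmono (c := C + fun i => ‖y i‖)
    (fun n => ⟨fun _ => norm_nonneg _, (hxC · n)⟩) (fun n => ⟨fun _ => norm_nonneg _, (hxyC · n)⟩)
    fun φ hφ a b ha hb => ?_
  have ha (i) := tendsto_pi_nhds.mp ha i
  have hb (i) := tendsto_pi_nhds.mp hb i
  obtain ⟨j, hj⟩ := Function.ne_iff.mp hy
  refine Pi.lt_def.mpr ⟨fun i => ?_, j, ?_⟩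
  · exact OpialProperty.le_of_tendsto (hOp i) ((hx i).comp_strictMono hφ) (ha i) (hb i)
  · exact OpialProperty.lt_of_tendsto (hOp j) ((hx j).comp_strictMono hφ) hj (ha j) (hb j)

/-- If `N` is a strictly monotone absolute normalised norm on `ℝ^m` and `X 1, …, X m` are Banach
spaces with the Opial property, then the `E`-sum has the Opial property, stated explicitly
in terms of `N` and componentwise weakly null sequences. -/
theorem statement11 (m : ℕ) (N : (Fin m → ℝ) → ℝ)
    (hadd : ∀ a b : Fin m → ℝ, N (a + b) ≤ N a + N b)
    (hhom : ∀ (c : ℝ) (a : Fin m → ℝ), N (c • a) = |c| * N a)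
    (hdef : ∀ a : Fin m → ℝ, N a = 0 → a = 0)
    (habs : ∀ a b : Fin m → ℝ, (∀ i, |a i| = |b i|) → N a = N b)
    (hnormalised : ∀ i, N (Pi.single i 1) = 1)
    (hstrictmono : ∀ a b : Fin m → ℝ, N a = N b → (∀ i, |a i| ≤ |b i|) → ∀ i, |a i| = |b i|)
    (X : Fin m → Type*) [∀ i, NormedAddCommGroup (X i)] [∀ i, NormedSpace ℝ (X i)]
    [∀ i, CompleteSpace (X i)]
    (hOp : ∀ i, ∀ u : ℕ → X i, WeaklyNull u → ∀ z : X i, z ≠ 0 →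
      limsup (fun n => ‖u n‖) atTop < limsup (fun n => ‖u n - z‖) atTop)
    (x : ∀ i, ℕ → X i) (hx : ∀ i, WeaklyNull (x i)) (y : ∀ i, X i) (hy : y ≠ 0) :
    limsup (fun n => N fun i => ‖x i n‖) atTop <
      limsup (fun n => N fun i => ‖x i n - y i‖) atTop :=
  statement11_general m N hadd hhom habs hstrictmono X hOp x hx y hy
end
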